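/- In the near-field plane Ω of order 9, the 10-point set O₁ = {(-1,i), (0,1), (1,0), (-i,-j), (i,j), (-j,-1), (j,k), (-k,-i), (0,1,0), (1,0,0)} (where the last two are the ideal points with ideal coordinates (0,1,0) and (1,0,0)) is an oval: no three of its points are collinear. -/

import Mathlib

/-!
A field `K` of order 9 with a square root `i` of `-1` is `𝔽₃(i)`, so `(a, b) ↦ a + b i` is a
bijection from the computable model `ZMod 3 × ZMod 3` onto `K`, multiplicative for the
Gaussian product of pairs. The nonzero squares are `±1, ±i`, i.e. the elements with `a b = 0`,
which makes Dickson's product `⊙` a decidable operation on pairs. Transporting points, lines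
and incidence of `Ω` along this bijection turns the statement into a finite check on the model:
each of its 91 lines meets the ten points at most twice.
-/

/-- The miniquaternion multiplication on a field of 9 elements: `x ⊙ y = x·y` if `y` is
a square, and `x ⊙ y = x³·y` otherwise (Dickson's construction). -/
noncomputable def nmul {K : Type*} [Field K] (x y : K) : K :=
  letI := Classical.propDecidable (IsSquare y)
  if IsSquare y then x * y else x ^ 3 * y

/-- Points of the near-field plane `Ω` of order 9: 81 proper points `(x,y)`, 9 ideal
points `(1,μ,0)` (one for each slope `μ`), and the ideal point `(0,1,0)`. -/
inductive Pt (K : Type*) where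
  | prop : K → K → Pt K
  | ideal : K → Pt K
  | inf : Pt K
deriving DecidableEq

/-- Lines of the near-field plane `Ω`: 81 proper lines `y = x⊙μ + ν`, 9 vertical lines
`x = λ`, and the ideal line. -/
inductive Ln (K : Type*) where
  | prop : K → K → Ln K
  | vert : K → Ln K
  | inf : Ln K
deriving DecidableEq

/-- Incidence in the plane `Ω`: `(x,y)` lies on `y = x⊙μ + ν` and on `x = λ` (if
`x = λ`); the ideal point of slope `μ` lies on all lines of slope `μ` and on the ideal
line; `(0,1,0)` lies on all vertical lines and on the ideal line. -/
noncomputable def Incid {K : Type*} [Field K] : Pt K → Ln K → Prop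
  | .prop x y, .prop μ ν => y = nmul x μ + ν
  | .prop x _, .vert l => x = l
  | .prop _ _, .inf => False
  | .ideal m, .prop μ _ => m = μ
  | .ideal _, .vert _ => False
  | .ideal _, .inf => True
  | .inf, .prop _ _ => False
  | .inf, .vert _ => True
  | .inf, .inf => True

theorem Finset.not_three_of_card_filter_le_two {ι : Type*} [Fintype ι]
    {P : ι → Prop} [DecidablePred P] (h : (Finset.univ.filter P).card ≤ 2) {a b c : ι}
    (hab : a ≠ b) (hbc : b ≠ c) (hac : a ≠ c) : ¬ (P a ∧ P b ∧ P c) := by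
  rintro ⟨ha, hb, hc⟩
  refine h.not_gt (Finset.two_lt_card.mpr ⟨a, ?_, b, ?_, c, ?_, hab, hac, hbc⟩) <;> simpa

namespace Ln

variable {A B : Type*}

def equivSum : Ln A ≃ (A × A) ⊕ A ⊕ Unit where
  toFun
    | .prop μ ν => .inl (μ, ν)
    | .vert l => .inr (.inl l)
    | .inf => .inr (.inr ())
  invFun
    | .inl (μ, ν) => .prop μ ν
    | .inr (.inl l) => .vert l
    | .inr (.inr _) => .inf
  left_inv L := by cases L <;> rfl
  right_inv x := by rcases x with ⟨μ, ν⟩ | l | ⟨⟩ <;> rfl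

instance [Fintype A] : Fintype (Ln A) := Fintype.ofEquiv _ equivSum.symm

def map (f : A → B) : Ln A → Ln B
  | .prop μ ν => .prop (f μ) (f ν)
  | .vert l => .vert (f l)
  | .inf => .inf

theorem map_surjective {f : A → B} (hf : Function.Surjective f) :
    Function.Surjective (map f) := by
  rintro (⟨μ, ν⟩ | l | _)
  · obtain ⟨μ, rfl⟩ := hf μ
    obtain ⟨ν, rfl⟩ := hf ν
    exact ⟨.prop μ ν, rfl⟩
  · obtain ⟨l, rfl⟩ := hf l
    exact ⟨.vert l, rfl⟩
  · exact ⟨.inf, rfl⟩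

end Ln

namespace Pt

variable {A B : Type*}

def map (f : A → B) : Pt A → Pt B
  | .prop x y => .prop (f x) (f y)
  | .ideal m => .ideal (f m)
  | .inf => .inf

theorem map_injective {f : A → B} (hf : Function.Injective f) :
    Function.Injective (map f) := by
  rintro (⟨x, y⟩ | m | _) (⟨x', y'⟩ | m' | _) h <;> simp only [map, reduceCtorEq] at h
  · obtain ⟨hx, hy⟩ := Pt.prop.inj h
    rw [hf hx, hf hy]
  · rw [hf (Pt.ideal.inj h)]
  · rfl

end Pt

section IncidWith

variable {A B : Type*} [Add A] [Add B]

def IncidWith (m : A → A → A) : Pt A → Ln A → Prop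
  | .prop x y, .prop μ ν => y = m x μ + ν
  | .prop x _, .vert l => x = l
  | .prop _ _, .inf => False
  | .ideal s, .prop μ _ => s = μ
  | .ideal _, .vert _ => False
  | .ideal _, .inf => True
  | .inf, .prop _ _ => False
  | .inf, .vert _ => True
  | .inf, .inf => True

instance [DecidableEq A] (m : A → A → A) : ∀ p L, Decidable (IncidWith m p L)
  | .prop x y, .prop μ ν => decEq y (m x μ + ν)
  | .prop x _, .vert l => decEq x l
  | .prop _ _, .inf => isFalse id
  | .ideal s, .prop μ _ => decEq s μ
  | .ideal _, .vert _ => isFalse id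
  | .ideal _, .inf => isTrue trivial
  | .inf, .prop _ _ => isFalse id
  | .inf, .vert _ => isTrue trivial
  | .inf, .inf => isTrue trivial

theorem incid_eq_incidWith_nmul {K : Type*} [Field K] :
    (Incid : Pt K → Ln K → Prop) = IncidWith nmul := by
  funext p L
  cases p <;> cases L <;> rfl

theorem incidWith_map_iff {m : A → A → A} {m' : B → B → B} {f : A → B}
    (hf : Function.Injective f) (hadd : ∀ x y, f (x + y) = f x + f y)
    (hm : ∀ x y, m' (f x) (f y) = f (m x y)) (p : Pt A) (L : Ln A) :
    IncidWith m' (p.map f) (L.map f) ↔ IncidWith m p L := by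
  rcases p with ⟨x, y⟩ | s | _ <;> rcases L with ⟨μ, ν⟩ | l | _ <;>
    simp only [Pt.map, Ln.map, IncidWith]
  · rw [hm, ← hadd, hf.eq_iff]
  all_goals exact hf.eq_iff

end IncidWith

abbrev F9 := ZMod 3 × ZMod 3

namespace F9

def mul (u v : F9) : F9 := (u.1 * v.1 - u.2 * v.2, u.1 * v.2 + u.2 * v.1)

def nmul (x y : F9) : F9 := if y.1 * y.2 = 0 then mul x y else mul (mul (mul x x) x) y

theorem mul_self_fst_mul_snd (u : F9) : (mul u u).1 * (mul u u).2 = 0 := by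
  revert u; decide

theorem exists_mul_self_of_fst_mul_snd {y : F9} : y.1 * y.2 = 0 → ∃ u, y = mul u u := by
  revert y; decide

theorem eq_zero_of_normSq_eq_zero {u : F9} : u.1 * u.1 + u.2 * u.2 = 0 → u = 0 := by
  revert u; decide

section Embedding

variable {K : Type*} [Field K] [CharP K 3]

noncomputable def embed (i : K) (u : F9) : K :=
  ZMod.castHom (dvd_refl 3) K u.1 + ZMod.castHom (dvd_refl 3) K u.2 * i

theorem embed_add (i : K) (u v : F9) : embed i (u + v) = embed i u + embed i v := by
  simp only [embed, Prod.fst_add, Prod.snd_add, map_add]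
  ring

theorem embed_mul {i : K} (hi : i * i = -1) (u v : F9) :
    embed i (mul u v) = embed i u * embed i v := by
  simp only [embed, mul, map_add, map_sub, map_mul]
  linear_combination (-(ZMod.castHom (dvd_refl 3) K u.2 * ZMod.castHom (dvd_refl 3) K v.2)) * hi

theorem embed_injective {i : K} (hi : i * i = -1) : Function.Injective (embed i) := by
  set e := ZMod.castHom (dvd_refl 3) K
  suffices h : ∀ u, embed i u = 0 → u = 0 by
    intro u v huv
    have h0 : embed i (u - v) = 0 := by
      rw [← add_right_inj (embed i v), ← embed_add, add_sub_cancel, huv, add_zero]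
    exact sub_eq_zero.mp (h _ h0)
  intro u hu
  -- multiply `a + b i = 0` by the conjugate: the norm `a² + b²` vanishes only at `0` in `𝔽₃`
  apply eq_zero_of_normSq_eq_zero
  apply e.injective
  have hu : e u.1 + e u.2 * i = 0 := hu
  rw [map_zero, map_add, map_mul, map_mul]
  linear_combination (e u.1 - e u.2 * i) * hu + e u.2 * e u.2 * hi

variable [Fintype K]

theorem embed_bijective (hK : Fintype.card K = 9) {i : K} (hi : i * i = -1) :
    Function.Bijective (embed i) := by
  rw [Fintype.bijective_iff_injective_and_card]
  exact ⟨embed_injective hi, by simp [hK]⟩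

theorem isSquare_embed_iff (hK : Fintype.card K = 9) {i : K} (hi : i * i = -1) (y : F9) :
    IsSquare (embed i y) ↔ y.1 * y.2 = 0 := by
  have hbij := embed_bijective hK hi
  constructor
  · rintro ⟨r, hr⟩
    obtain ⟨u, rfl⟩ := hbij.surjective r
    rw [← embed_mul hi] at hr
    rw [hbij.injective hr]
    exact mul_self_fst_mul_snd u
  · intro h
    obtain ⟨u, rfl⟩ := exists_mul_self_of_fst_mul_snd h
    exact ⟨embed i u, embed_mul hi u u⟩

theorem nmul_embed (hK : Fintype.card K = 9) {i : K} (hi : i * i = -1) (x y : F9) :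
    _root_.nmul (embed i x) (embed i y) = embed i (nmul x y) := by
  by_cases h : y.1 * y.2 = 0
  · have hs : IsSquare (embed i y) := (isSquare_embed_iff hK hi y).mpr h
    simp only [_root_.nmul, if_pos hs, nmul, if_pos h, embed_mul hi]
  · have hs : ¬ IsSquare (embed i y) := mt (isSquare_embed_iff hK hi y).mp h
    simp only [_root_.nmul, if_neg hs, nmul, if_neg h, embed_mul hi]
    ring

end Embedding

end F9

def ovalModel : Fin 10 → Pt F9 :=
  ![.prop (-1, 0) (0, 1), .prop (0, 0) (1, 0), .prop (1, 0) (0, 0), .prop (0, -1) (-1, -1),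
    .prop (0, 1) (1, 1), .prop (-1, -1) (-1, 0), .prop (1, 1) (1, -1), .prop (-1, 1) (0, -1),
    .inf, .ideal (0, 0)]

theorem ovalModel_injective : Function.Injective ovalModel := by decide

theorem card_ovalModel_incidWith_le_two (L : Ln F9) :
    (Finset.univ.filter fun a => IncidWith F9.nmul (ovalModel a) L).card ≤ 2 := by
  revert L; decide
/-- In the near-field plane `Ω` of order 9, the 10-point set
`O₁ = {(-1,i), (0,1), (1,0), (-i,-j), (i,j), (-j,-1), (j,k), (-k,-i), (0,1,0), (1,0,0)}`
is an oval: the points are distinct and no three of them are collinear. -/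
theorem omega_oval (K : Type*) [Field K] [Fintype K] (hK : Fintype.card K = 9)
    (i : K) (hi : i * i = -1) (j k : K) (hj : j = 1 + i) (hk : k = 1 - i) :
    let pts : Fin 10 → Pt K :=
      ![.prop (-1) i, .prop 0 1, .prop 1 0, .prop (-i) (-j), .prop i j,
        .prop (-j) (-1), .prop j k, .prop (-k) (-i), .inf, .ideal 0]
    Function.Injective pts ∧
      ∀ a b c : Fin 10, a ≠ b → b ≠ c → a ≠ c →
        ¬ ∃ L : Ln K, Incid (pts a) L ∧ Incid (pts b) L ∧ Incid (pts c) L := by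
  intro pts
  have : CharP K 3 := charP_of_card_eq_prime_pow (f := 2) hK
  have hpts : pts = Pt.map (F9.embed i) ∘ ovalModel := by
    funext t
    fin_cases t <;> simp [pts, ovalModel, Pt.map, F9.embed, hj, hk, sub_eq_add_neg, add_comm]
  have hincid (p : Pt F9) (L : Ln F9) :
      Incid (p.map (F9.embed i)) (L.map (F9.embed i)) ↔ IncidWith F9.nmul p L := by
    rw [incid_eq_incidWith_nmul]
    exact incidWith_map_iff (F9.embed_injective hi) (F9.embed_add i) (F9.nmul_embed hK hi) p L
  refine ⟨hpts ▸ (Pt.map_injective (F9.embed_injective hi)).comp ovalModel_injective, ?_⟩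
  rintro a b c hab hbc hac ⟨L, hL⟩
  obtain ⟨L, rfl⟩ := Ln.map_surjective (F9.embed_bijective hK hi).surjective L
  simp only [hpts, Function.comp_apply, hincid] at hL
  exact Finset.not_three_of_card_filter_le_two (card_ovalModel_incidWith_le_two L) hab hbc hac hL
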